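/- Let x_0 = (1/3, 1/3, …, 1/3) ∈ ℝ^9 and let X^{(iii)} ⊆ ℝ^9 be the set of the 72 vectors having one coordinate equal to 4/3, seven coordinates equal to 1/3, and one coordinate equal to −2/3. Then: (a) for every y ∈ H(9,3) \ J̃(9,3), the union J̃(9,3) ∪ {y} is a three-distance set if and only if y ∈ {x_0} ∪ X^{(iii)}; (b) d(x_0, y) = √2 for every y ∈ X^{(iii)}; and (c) for every y ∈ X^{(iii)}, the vector y' = 2x_0 − y also belongs to X^{(iii)} and d(y, y') = 2√2. -/

import Mathlib

noncomputable section

/-- The set of distances between distinct points of `S`. -/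
def distSet {n : ℕ} (S : Set (EuclideanSpace ℝ (Fin n))) : Set ℝ :=
  {d | ∃ x ∈ S, ∃ y ∈ S, x ≠ y ∧ d = dist x y}

/-- `S` is an `s`-distance set: exactly `s` distances occur between distinct points. -/
def IsSDistanceSet {n : ℕ} (s : ℕ) (S : Set (EuclideanSpace ℝ (Fin n))) : Prop :=
  (distSet S).Finite ∧ (distSet S).ncard = s

/-- The representation `J̃(n,m)` of the Johnson graph `J(n,m)`: vectors with exactly `m`
coordinates equal to `1` and the rest equal to `0`. -/
def JohnsonRep (n m : ℕ) : Set (EuclideanSpace ℝ (Fin n)) :=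
  {x | (∀ i, x i = 0 ∨ x i = 1) ∧ {i : Fin n | x i = 1}.ncard = m}

/-- The hyperplane `H(n,m) = {x : ∑ x_i = m}`. -/
def Hyp (n m : ℕ) : Set (EuclideanSpace ℝ (Fin n)) :=
  {x | ∑ i, x i = (m : ℝ)}

/-- The set `X⁽ⁱⁱⁱ⁾ = (4/3, (1/3)^7, -2/3)^P ⊆ ℝ⁹`. -/
def X93 : Set (EuclideanSpace ℝ (Fin 9)) :=
  {y | {i : Fin 9 | y i = 4/3}.ncard = 1 ∧ {i : Fin 9 | y i = 1/3}.ncard = 7 ∧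
    {i : Fin 9 | y i = -2/3}.ncard = 1}

/-!
Write `𝟙_T` for the `0/1` vector of a set `T`. Then `‖y - 𝟙_T‖² = ‖y‖² - 2 σ_T(y) + |T|`, with
`σ_T(y) = ∑_{i ∈ T} y_i`, so `J̃(9,3)` has the distances `√2, 2, √6`, and `J̃(9,3) ∪ {y}` is a
three-distance set iff `‖y‖² - 2 σ_T(y) + 3 ∈ {2, 4, 6}` for every `3`-set `T`. Exchanging one
element of `T` shows that the coordinates of `y` differ by integers of size at most `2`, so
`y = v + k` with `k` taking the values `0, 1, 2` and some `k_i = 0`. Then all triple sums of `k`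
lie within `2` of each other, and eliminating `v` by `∑ y_i = 3` gives `3 ∣ ∑ k_i`. Comparing the
smallest and the largest triple sum in terms of the numbers of `0`s, `1`s and `2`s of `k` leaves
only `k = 0`, i.e. `y = x₀`, and the counts `(1, 7, 1)`, i.e. `y ∈ X⁽ⁱⁱⁱ⁾`.
-/

open Finset

def indicatorVec {n : ℕ} (T : Finset (Fin n)) : EuclideanSpace ℝ (Fin n) :=
  WithLp.toLp 2 fun i => if i ∈ T then 1 else 0

section JohnsonRep

variable {n m : ℕ}

theorem johnsonRep_eq_image : JohnsonRep n m = indicatorVec '' {T | #T = m} := by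
  ext x
  constructor
  · rintro ⟨h01, hcard⟩
    refine ⟨({i | x i = 1} : Finset (Fin n)), ?_, ?_⟩
    · rw [Set.mem_ofPred_eq, ← Set.ncard_coe_finset, coe_filter_univ, hcard]
    · ext i
      rcases h01 i with h | h <;> simp [indicatorVec, h]
  · rintro ⟨T, hT, rfl⟩
    have hT1 : {i | indicatorVec T i = 1} = (T : Set (Fin n)) := by
      ext i
      by_cases h : i ∈ T <;> simp [indicatorVec, h]
    refine ⟨fun i => by by_cases h : i ∈ T <;> simp [indicatorVec, h], ?_⟩
    rw [hT1, Set.ncard_coe_finset]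
    exact hT

theorem indicatorVec_mem_johnsonRep {T : Finset (Fin n)} (hT : #T = m) :
    indicatorVec T ∈ JohnsonRep n m :=
  johnsonRep_eq_image ▸ Set.mem_image_of_mem _ hT

theorem dist_sq_eq_sum (x y : EuclideanSpace ℝ (Fin n)) :
    dist x y ^ 2 = ∑ i, (x i - y i) ^ 2 := by
  rw [EuclideanSpace.dist_eq, Real.sq_sqrt (by positivity)]
  simp [Real.dist_eq, sq_abs]

theorem dist_indicatorVec_sq (y : EuclideanSpace ℝ (Fin n)) (T : Finset (Fin n)) :
    dist y (indicatorVec T) ^ 2 = ∑ i, y i ^ 2 - 2 * ∑ i ∈ T, y i + #T := by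
  have h : ∀ i, (y i - indicatorVec T i) ^ 2
      = y i ^ 2 - 2 * (if i ∈ T then y i else 0) + (if i ∈ T then 1 else 0) := by
    intro i
    by_cases hi : i ∈ T
    · simp [indicatorVec, hi]; ring
    · simp [indicatorVec, hi]
  simp only [dist_sq_eq_sum, h, sum_add_distrib, sum_sub_distrib, ← mul_sum, sum_ite_mem,
    univ_inter, sum_const, nsmul_one]

theorem dist_indicatorVec_indicatorVec_sq (T T' : Finset (Fin n)) :
    dist (indicatorVec T) (indicatorVec T') ^ 2 = #T + #T' - 2 * #(T ∩ T') := by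
  have hsq : ∀ i, indicatorVec T i ^ 2 = if i ∈ T then 1 else 0 := fun i => by
    by_cases hi : i ∈ T <;> simp [indicatorVec, hi]
  rw [dist_indicatorVec_sq]
  simp only [hsq, sum_ite_mem, univ_inter, sum_const, nsmul_one]
  simp only [indicatorVec, sum_ite_mem, sum_const, nsmul_one, inter_comm T']
  ring

end JohnsonRep

theorem IsSDistanceSet.union_singleton_iff {n s : ℕ} {S : Set (EuclideanSpace ℝ (Fin n))}
    {y : EuclideanSpace ℝ (Fin n)} (hS : IsSDistanceSet s S) (hy : y ∉ S) :
    IsSDistanceSet s (S ∪ {y}) ↔ ∀ x ∈ S, dist y x ∈ distSet S := by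
  have hunion : distSet (S ∪ {y}) = distSet S ∪ (dist y '' S) := by
    ext d
    constructor
    · rintro ⟨u, hu | rfl, w, hw | rfl, huw, rfl⟩
      · exact Or.inl ⟨u, hu, w, hw, huw, rfl⟩
      · exact Or.inr ⟨u, hu, dist_comm _ _⟩
      · exact Or.inr ⟨w, hw, rfl⟩
      · exact absurd rfl huw
    · rintro (⟨u, hu, w, hw, huw, rfl⟩ | ⟨x, hx, rfl⟩)
      · exact ⟨u, Or.inl hu, w, Or.inl hw, huw, rfl⟩
      · exact ⟨y, Or.inr rfl, x, Or.inl hx, fun h => hy (h ▸ hx), rfl⟩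
  have hforall : (∀ x ∈ S, dist y x ∈ distSet S) ↔ dist y '' S ⊆ distSet S :=
    (Set.image_subset_iff (f := dist y) (s := S) (t := distSet S)).symm
  rw [hforall, ← Set.union_eq_left, IsSDistanceSet, hunion]
  constructor
  · rintro ⟨hfin, hcard⟩
    exact (Set.eq_of_subset_of_ncard_le Set.subset_union_left (by rw [hcard, hS.2]) hfin).symm
  · intro h
    rw [h]
    exact hS

theorem mem_sqrt_image_iff {A : Set ℝ} (hA : ∀ t ∈ A, 0 ≤ t) {d : ℝ} :
    d ∈ Real.sqrt '' A ↔ 0 ≤ d ∧ d ^ 2 ∈ A := by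
  constructor
  · rintro ⟨t, ht, rfl⟩
    exact ⟨Real.sqrt_nonneg t, by rwa [Real.sq_sqrt (hA t ht)]⟩
  · rintro ⟨hd, hd2⟩
    exact ⟨d ^ 2, hd2, Real.sqrt_sq hd⟩

theorem distSet_johnsonRep_nine_three :
    distSet (JohnsonRep 9 3) = Real.sqrt '' {2, 4, 6} := by
  ext d
  rw [mem_sqrt_image_iff (by norm_num)]
  constructor
  · rintro ⟨x, hx, x', hx', hne, rfl⟩
    rw [johnsonRep_eq_image] at hx hx'
    obtain ⟨T, hT : #T = 3, rfl⟩ := hx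
    obtain ⟨T', hT' : #T' = 3, rfl⟩ := hx'
    have hlt : #(T ∩ T') < 3 := by
      by_contra! h
      have h₁ : T ∩ T' = T := eq_of_subset_of_card_le inter_subset_left (by omega)
      have h₂ : T ∩ T' = T' := eq_of_subset_of_card_le inter_subset_right (by omega)
      exact hne (congrArg indicatorVec (h₁.symm.trans h₂))
    refine ⟨dist_nonneg, ?_⟩
    rw [dist_indicatorVec_indicatorVec_sq, hT, hT']
    interval_cases #(T ∩ T') <;> norm_num
  · rintro ⟨hd, hd2⟩
    have hd0 : d ≠ 0 := by rintro rfl; norm_num at hd2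
    have h012 : #({0, 1, 2} : Finset (Fin 9)) = 3 := by decide
    have hfrom : ∀ (T' : Finset (Fin 9)) (j : ℕ), #T' = 3 → #({0, 1, 2} ∩ T') = j →
        d ^ 2 = 6 - 2 * j → d ∈ distSet (JohnsonRep 9 3) := by
      intro T' j hT' hj hsq
      have hdist : d = dist (indicatorVec {0, 1, 2}) (indicatorVec T') := by
        refine (sq_eq_sq₀ hd dist_nonneg).mp ?_
        rw [dist_indicatorVec_indicatorVec_sq, h012, hT', hj, hsq]
        norm_num
      refine ⟨_, indicatorVec_mem_johnsonRep h012, _, indicatorVec_mem_johnsonRep hT',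
        fun h => hd0 ?_, hdist⟩
      rw [hdist, h, dist_self]
    rcases hd2 with h | h | h
    · exact hfrom {0, 1, 3} 2 (by decide) (by decide) (by rw [h]; norm_num)
    · exact hfrom {0, 3, 4} 1 (by decide) (by decide) (by rw [h]; norm_num)
    · exact hfrom {3, 4, 5} 0 (by decide) (by decide) (by rw [h]; norm_num)

theorem isSDistanceSet_johnsonRep_nine_three : IsSDistanceSet 3 (JohnsonRep 9 3) := by
  have hnonneg : ∀ t ∈ ({2, 4, 6} : Set ℝ), 0 ≤ t := by norm_num
  have hinj : Set.InjOn Real.sqrt {2, 4, 6} := fun a ha b hb h =>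
    (Real.sqrt_inj (hnonneg a ha) (hnonneg b hb)).mp h
  rw [IsSDistanceSet, distSet_johnsonRep_nine_three, hinj.ncard_image, Set.ncard_eq_three]
  exact ⟨Set.toFinite _, 2, 4, 6, by norm_num, by norm_num, by norm_num, rfl⟩

theorem isSDistanceSet_johnsonRep_union_iff {y : EuclideanSpace ℝ (Fin 9)}
    (hy : y ∉ JohnsonRep 9 3) :
    IsSDistanceSet 3 (JohnsonRep 9 3 ∪ {y}) ↔
      ∀ T : Finset (Fin 9), #T = 3 → dist y (indicatorVec T) ^ 2 ∈ ({2, 4, 6} : Set ℝ) := by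
  rw [isSDistanceSet_johnsonRep_nine_three.union_singleton_iff hy, distSet_johnsonRep_nine_three,
    johnsonRep_eq_image, Set.forall_mem_image]
  simp only [mem_sqrt_image_iff (A := {2, 4, 6}) (by norm_num), dist_nonneg, true_and]
  rfl

namespace X93

variable {y : EuclideanSpace ℝ (Fin 9)}

theorem card_filter (hy : y ∈ X93) :
    #{i | y i = 4 / 3} = 1 ∧ #{i | y i = 1 / 3} = 7 ∧ #{i | y i = -2 / 3} = 1 := by
  simpa only [X93, Set.mem_ofPred_eq, ← coe_filter_univ, Set.ncard_coe_finset] using hy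

theorem sum_comp (hy : y ∈ X93) (s : Finset (Fin 9)) (f : ℝ → ℝ) :
    ∑ i ∈ s, f (y i) = #{i ∈ s | y i = 4 / 3} * f (4 / 3) + #{i ∈ s | y i = 1 / 3} * f (1 / 3)
      + #{i ∈ s | y i = -2 / 3} * f (-2 / 3) := by
  obtain ⟨h₁, h₂, h₃⟩ := card_filter hy
  have hvals : ∀ i, y i ∈ ({4 / 3, 1 / 3, -2 / 3} : Finset ℝ) := by
    have hcard := sum_card_fiberwise_eq_card_filter univ {4 / 3, 1 / 3, -2 / 3} y
    rw [sum_insert (by norm_num), sum_insert (by norm_num), sum_singleton, h₁, h₂, h₃] at hcard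
    exact fun i => card_filter_eq_iff.mp hcard.symm i (mem_univ i)
  have hfiber : ∀ b, ∑ i ∈ s with y i = b, f (y i) = #{i ∈ s | y i = b} * f b := fun b => by
    rw [sum_congr rfl fun i hi => by rw [(mem_filter.mp hi).2], sum_const, nsmul_eq_mul]
  rw [← sum_fiberwise_of_maps_to fun i _ => hvals i, sum_insert (by norm_num),
    sum_insert (by norm_num), sum_singleton, hfiber, hfiber, hfiber, add_assoc]

theorem sum_comp_univ (hy : y ∈ X93) (f : ℝ → ℝ) :
    ∑ i, f (y i) = f (4 / 3) + 7 * f (1 / 3) + f (-2 / 3) := by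
  obtain ⟨h₁, h₂, h₃⟩ := card_filter hy
  rw [sum_comp hy, h₁, h₂, h₃]
  push_cast
  ring

theorem sum_sq (hy : y ∈ X93) : ∑ i, y i ^ 2 = 3 := by
  rw [sum_comp_univ hy fun t => t ^ 2]
  norm_num

theorem dist_indicatorVec_sq_mem {T : Finset (Fin 9)} (hy : y ∈ X93) (hT : #T = 3) :
    dist y (indicatorVec T) ^ 2 ∈ ({2, 4, 6} : Set ℝ) := by
  obtain ⟨h₁, -, h₃⟩ := card_filter hy
  have hp : #{i ∈ T | y i = 4 / 3} ≤ 1 :=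
    (card_le_card (filter_subset_filter _ (subset_univ T))).trans h₁.le
  have hn : #{i ∈ T | y i = -2 / 3} ≤ 1 :=
    (card_le_card (filter_subset_filter _ (subset_univ T))).trans h₃.le
  have hcard := sum_comp hy T fun _ => 1
  rw [sum_const, hT, nsmul_one] at hcard
  have hvalues : ∀ p n : ℕ, p ≤ 1 → n ≤ 1 → (6 : ℝ) - 2 * (1 + p - n) ∈ ({2, 4, 6} : Set ℝ) := by
    intro p n hp hn
    interval_cases p <;> interval_cases n <;> norm_num
  convert hvalues _ _ hp hn using 1
  rw [dist_indicatorVec_sq, sum_sq hy, sum_comp hy T fun t => t, hT]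
  push_cast at hcard ⊢
  linarith

variable {x₀ : EuclideanSpace ℝ (Fin 9)} (hx₀ : ∀ i, x₀ i = 1 / 3)
include hx₀

theorem reflect_mem (hy : y ∈ X93) : (2 : ℝ) • x₀ - y ∈ X93 := by
  have hlevel : ∀ c : ℝ, {i | ((2 : ℝ) • x₀ - y) i = c} = {i | y i = 2 / 3 - c} := fun c => by
    ext i
    simp only [PiLp.sub_apply, PiLp.smul_apply, smul_eq_mul, hx₀, Set.mem_ofPred_eq]
    constructor <;> intro h <;> linarith
  obtain ⟨h₁, h₂, h₃⟩ := hy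
  refine ⟨?_, ?_, ?_⟩ <;> rw [hlevel]
  · convert h₃ using 4; norm_num
  · convert h₂ using 4; norm_num
  · convert h₁ using 4; norm_num

theorem dist_eq_sqrt_two (hy : y ∈ X93) : dist x₀ y = √2 := by
  refine (sq_eq_sq₀ dist_nonneg (Real.sqrt_nonneg 2)).mp ?_
  rw [Real.sq_sqrt zero_le_two, dist_sq_eq_sum]
  simp only [hx₀]
  rw [sum_comp_univ hy fun t => (1 / 3 - t) ^ 2]
  norm_num

theorem dist_reflect (hy : y ∈ X93) : dist y ((2 : ℝ) • x₀ - y) = 2 * √2 := by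
  refine (sq_eq_sq₀ dist_nonneg (by positivity)).mp ?_
  rw [mul_pow, Real.sq_sqrt zero_le_two, dist_sq_eq_sum]
  simp only [PiLp.sub_apply, PiLp.smul_apply, smul_eq_mul, hx₀]
  rw [sum_comp_univ hy fun t => (t - (2 * (1 / 3) - t)) ^ 2]
  norm_num

end X93

section LevelCounts

variable {ι : Type*} [Fintype ι] (k : ι → ℕ)

theorem card_level_add_card_level_add_card_level (hk : ∀ i, k i ≤ 2) :
    #{i | k i = 0} + #{i | k i = 1} + #{i | k i = 2} = Fintype.card ι := by
  have h := card_eq_sum_card_fiberwise (s := univ) (t := range 3) (f := k)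
    fun i _ => mem_range.mpr (Nat.lt_succ_of_le (hk i))
  simp only [sum_range_succ, sum_range_zero, zero_add, card_univ] at h
  exact h.symm

theorem sum_eq_card_level_add_two_mul_card_level (hk : ∀ i, k i ≤ 2) :
    ∑ i, k i = #{i | k i = 1} + 2 * #{i | k i = 2} := by
  rw [← sum_fiberwise_of_maps_to (t := range 3) (g := k)
    fun i _ => mem_range.mpr (Nat.lt_succ_of_le (hk i))]
  have hlevel : ∀ j, ∑ i with k i = j, k i = #{i | k i = j} * j := fun j =>
    sum_const_nat fun i hi => (mem_filter.mp hi).2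
  simp only [sum_range_succ, sum_range_zero, hlevel]
  ring

theorem exists_card_eq_sum_eq [DecidableEq ι] {n₀ n₁ n₂ : ℕ} (h₀ : n₀ ≤ #{i | k i = 0})
    (h₁ : n₁ ≤ #{i | k i = 1}) (h₂ : n₂ ≤ #{i | k i = 2}) :
    ∃ T : Finset ι, #T = n₀ + n₁ + n₂ ∧ ∑ i ∈ T, k i = n₁ + 2 * n₂ := by
  have hlevel : ∀ j n, n ≤ #{i | k i = j} →
      ∃ S : Finset ι, (∀ i ∈ S, k i = j) ∧ #S = n ∧ ∑ i ∈ S, k i = n * j := by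
    intro j n hn
    obtain ⟨S, hS, hcard⟩ := exists_subset_card_eq hn
    have hSj : ∀ i ∈ S, k i = j := fun i hi => (mem_filter.mp (hS hi)).2
    exact ⟨S, hSj, hcard, by rw [sum_const_nat hSj, hcard]⟩
  have hdisj : ∀ {S S' : Finset ι} {j j' : ℕ}, (∀ i ∈ S, k i = j) → (∀ i ∈ S', k i = j') →
      j ≠ j' → Disjoint S S' := fun hS hS' hjj' =>
    disjoint_left.mpr fun i hi hi' => hjj' ((hS i hi).symm.trans (hS' i hi'))
  obtain ⟨S₀, hS₀, hc₀, hs₀⟩ := hlevel 0 n₀ h₀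
  obtain ⟨S₁, hS₁, hc₁, hs₁⟩ := hlevel 1 n₁ h₁
  obtain ⟨S₂, hS₂, hc₂, hs₂⟩ := hlevel 2 n₂ h₂
  have hd₀₁ := hdisj hS₀ hS₁ zero_ne_one
  have hd₀₂₁ := disjoint_union_left.mpr ⟨hdisj hS₀ hS₂ (by norm_num), hdisj hS₁ hS₂ (by norm_num)⟩
  refine ⟨S₀ ∪ S₁ ∪ S₂, ?_, ?_⟩
  · rw [card_union_of_disjoint hd₀₂₁, card_union_of_disjoint hd₀₁, hc₀, hc₁, hc₂]
  · rw [sum_union hd₀₂₁, sum_union hd₀₁, hs₀, hs₁, hs₂]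
    ring

end LevelCounts

theorem level_counts_cases {a b c : ℕ} (habc : a + b + c = 9) (ha : 1 ≤ a) (hdvd : 3 ∣ b + 2 * c)
    (hgap : ∀ n₀ n₁ n₂ m₀ m₁ m₂ : ℕ, n₀ + n₁ + n₂ = 3 → m₀ + m₁ + m₂ = 3 →
      n₀ ≤ a → n₁ ≤ b → n₂ ≤ c → m₀ ≤ a → m₁ ≤ b → m₂ ≤ c → m₁ + 2 * m₂ ≤ n₁ + 2 * n₂ + 2) :
    b = 0 ∧ c = 0 ∨ a = 1 ∧ b = 7 ∧ c = 1 := by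
  -- compare the three smallest with the three largest values, both chosen greedily
  have h := hgap (min a 3) (min b (3 - min a 3)) (3 - min a 3 - min b (3 - min a 3))
    (3 - min c 3 - min b (3 - min c 3)) (min b (3 - min c 3)) (min c 3)
    (by omega) (by omega) (by omega) (by omega) (by omega) (by omega) (by omega) (by omega)
  simp only [min_def] at h
  split_ifs at h <;> omega

theorem exists_int_of_mem_two_four_six {x : ℝ} (hx : x ∈ ({2, 4, 6} : Set ℝ)) :
    ∃ e : ℤ, 1 ≤ e ∧ e ≤ 3 ∧ x = 2 * e := by
  rcases hx with rfl | rfl | rfl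
  exacts [⟨1, by norm_num⟩, ⟨2, by norm_num⟩, ⟨3, by norm_num⟩]

theorem sum_eq_card_mul_add_sum {n : ℕ} {y : EuclideanSpace ℝ (Fin n)} {v : ℝ} {k : Fin n → ℕ}
    (hyk : ∀ i, y i = v + k i) (s : Finset (Fin n)) :
    ∑ i ∈ s, y i = #s * v + ∑ i ∈ s, (k i : ℝ) := by
  simp only [hyk, sum_add_distrib, sum_const, nsmul_eq_mul]

section Classification

variable {n : ℕ} {y : EuclideanSpace ℝ (Fin n)}
  (hdist : ∀ T : Finset (Fin n), #T = 3 → dist y (indicatorVec T) ^ 2 ∈ ({2, 4, 6} : Set ℝ))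
include hdist

theorem exists_int_sub_sum_triple {T T' : Finset (Fin n)} (hT : #T = 3) (hT' : #T' = 3) :
    ∃ d : ℤ, |d| ≤ 2 ∧ ∑ i ∈ T', y i - ∑ i ∈ T, y i = d := by
  obtain ⟨e, he₁, he₃, he⟩ := exists_int_of_mem_two_four_six (hdist T hT)
  obtain ⟨e', he₁', he₃', he'⟩ := exists_int_of_mem_two_four_six (hdist T' hT')
  rw [dist_indicatorVec_sq, hT] at he
  rw [dist_indicatorVec_sq, hT'] at he'
  refine ⟨e - e', abs_le.mpr ⟨by omega, by omega⟩, ?_⟩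
  push_cast
  linarith

theorem exists_int_sub_apply (hn : 4 ≤ n) {i j : Fin n} (hij : i ≠ j) :
    ∃ d : ℤ, |d| ≤ 2 ∧ y i - y j = d := by
  obtain ⟨S, hS, hScard⟩ : ∃ S ⊆ univ \ {i, j}, #S = 2 :=
    exists_subset_card_eq (by rw [card_sdiff_of_subset (subset_univ _), card_pair hij]; simp; omega)
  have hiS : i ∉ S := fun h => by simpa using hS h
  have hjS : j ∉ S := fun h => by simpa using hS h
  obtain ⟨d, hd, hsub⟩ := exists_int_sub_sum_triple hdist
    (by rw [card_insert_of_notMem hjS, hScard]) (by rw [card_insert_of_notMem hiS, hScard])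
  rw [sum_insert hiS, sum_insert hjS] at hsub
  exact ⟨d, hd, by linarith⟩

theorem exists_nat_offsets (hn : 4 ≤ n) :
    ∃ (v : ℝ) (k : Fin n → ℕ), (∀ i, k i ≤ 2) ∧ (∃ i, k i = 0) ∧ ∀ i, y i = v + k i := by
  obtain ⟨i₀, -, hmin⟩ := exists_min_image univ y ⟨⟨0, by omega⟩, mem_univ _⟩
  have hoff : ∀ i, ∃ m : ℕ, m ≤ 2 ∧ y i = y i₀ + m := by
    intro i
    by_cases hi : i = i₀
    · exact ⟨0, by simp [hi]⟩
    obtain ⟨d, hd, hsub⟩ := exists_int_sub_apply hdist hn hi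
    have hd₀ : 0 ≤ d := by
      have := hmin i (mem_univ i)
      exact_mod_cast (show (0 : ℝ) ≤ d by linarith)
    obtain ⟨m, rfl⟩ := Int.eq_ofNat_of_zero_le hd₀
    exact ⟨m, by rw [abs_of_nonneg hd₀] at hd; omega, by push_cast at hsub; linarith⟩
  choose k hk₂ hk using hoff
  exact ⟨y i₀, k, hk₂, ⟨i₀, by exact_mod_cast (by linarith [hk i₀] : (k i₀ : ℝ) = 0)⟩, hk⟩

theorem sum_triple_le_sum_triple_add_two {v : ℝ} {k : Fin n → ℕ} (hyk : ∀ i, y i = v + k i)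
    {T T' : Finset (Fin n)} (hT : #T = 3) (hT' : #T' = 3) :
    ∑ i ∈ T', k i ≤ ∑ i ∈ T, k i + 2 := by
  obtain ⟨d, hd, hsub⟩ := exists_int_sub_sum_triple hdist hT hT'
  rw [sum_eq_card_mul_add_sum hyk, sum_eq_card_mul_add_sum hyk, hT, hT'] at hsub
  have hd₂ : (d : ℝ) ≤ 2 := by exact_mod_cast (abs_le.mp hd).2
  exact_mod_cast (by push_cast; linarith : ((∑ i ∈ T', k i : ℕ) : ℝ) ≤ ∑ i ∈ T, k i + 2)

end Classification

theorem three_dvd_sum {y : EuclideanSpace ℝ (Fin 9)}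
    (hdist : ∀ T : Finset (Fin 9), #T = 3 → dist y (indicatorVec T) ^ 2 ∈ ({2, 4, 6} : Set ℝ))
    {v : ℝ} {k : Fin 9 → ℕ} (hyk : ∀ i, y i = v + k i) (hsum : ∑ i, y i = 3) :
    3 ∣ ∑ i, k i := by
  obtain ⟨e, -, -, he⟩ := exists_int_of_mem_two_four_six (hdist {0, 1, 2} (by decide))
  rw [dist_indicatorVec_sq, sum_eq_card_mul_add_sum hyk, show #({0, 1, 2} : Finset (Fin 9)) = 3 by
    decide] at he
  rw [sum_eq_card_mul_add_sum hyk, card_univ, Fintype.card_fin] at hsum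
  have hsq : ∑ i, y i ^ 2 = 9 * v ^ 2 + 2 * v * ∑ i, (k i : ℝ) + ∑ i, (k i : ℝ) ^ 2 := by
    simp only [hyk, add_sq, sum_add_distrib, sum_const, ← mul_sum]
    simp
  -- substituting `9 v = 3 - K`, with `K = ∑ k_i`, into the distance to `𝟙_{0,1,2}`
  have hint : ((∑ i, k i : ℕ) : ℤ) * ((∑ i, k i : ℕ) - 6)
      = 9 * (2 + ∑ i, (k i : ℤ) ^ 2 - 2 * ∑ i ∈ {0, 1, 2}, (k i : ℤ) - 2 * e) := by
    have hreal : ((∑ i, k i : ℕ) : ℝ) * ((∑ i, k i : ℕ) - 6)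
        = 9 * (2 + ∑ i, (k i : ℝ) ^ 2 - 2 * ∑ i ∈ {0, 1, 2}, (k i : ℝ) - 2 * e) := by
      push_cast
      linear_combination (-9) * he + 9 * hsq + (∑ i, (k i : ℝ) + 9 * v - 3) * hsum
    exact_mod_cast hreal
  have hdvd : (3 : ℤ) ∣ (∑ i, k i : ℕ) * ((∑ i, k i : ℕ) - 6) := by
    rw [hint]
    exact dvd_mul_of_dvd_left (by norm_num) _
  rcases Int.prime_three.dvd_or_dvd hdvd with h | h <;> omega

theorem eq_one_third_or_mem_X93 {y : EuclideanSpace ℝ (Fin 9)}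
    (hdist : ∀ T : Finset (Fin 9), #T = 3 → dist y (indicatorVec T) ^ 2 ∈ ({2, 4, 6} : Set ℝ))
    (hsum : ∑ i, y i = 3) : (∀ i, y i = 1 / 3) ∨ y ∈ X93 := by
  obtain ⟨v, k, hk₂, ⟨i₀, hi₀⟩, hyk⟩ := exists_nat_offsets hdist (by norm_num)
  have hgap : ∀ n₀ n₁ n₂ m₀ m₁ m₂ : ℕ, n₀ + n₁ + n₂ = 3 → m₀ + m₁ + m₂ = 3 →
      n₀ ≤ #{i | k i = 0} → n₁ ≤ #{i | k i = 1} → n₂ ≤ #{i | k i = 2} →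
      m₀ ≤ #{i | k i = 0} → m₁ ≤ #{i | k i = 1} → m₂ ≤ #{i | k i = 2} →
      m₁ + 2 * m₂ ≤ n₁ + 2 * n₂ + 2 := by
    intro n₀ n₁ n₂ m₀ m₁ m₂ hn hm hn₀ hn₁ hn₂ hm₀ hm₁ hm₂
    obtain ⟨T, hT, hsT⟩ := exists_card_eq_sum_eq k hn₀ hn₁ hn₂
    obtain ⟨T', hT', hsT'⟩ := exists_card_eq_sum_eq k hm₀ hm₁ hm₂
    have := sum_triple_le_sum_triple_add_two hdist hyk (hT.trans hn) (hT'.trans hm)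
    omega
  have hK := sum_eq_card_level_add_two_mul_card_level k hk₂
  have h₀ : 1 ≤ #{i | k i = 0} := card_pos.mpr ⟨i₀, by simpa using hi₀⟩
  have hdvd := three_dvd_sum hdist hyk hsum
  rw [sum_eq_card_mul_add_sum hyk, card_univ, Fintype.card_fin, Nat.cast_ofNat] at hsum
  have hlevel : ∀ (j : ℕ) (c : ℝ), c = v + j → {i | y i = c}.ncard = #{i | k i = j} := by
    rintro j c rfl
    rw [← Set.ncard_coe_finset, coe_filter_univ]
    simp only [hyk, add_right_inj, Nat.cast_inj]
  rcases level_counts_cases (card_level_add_card_level_add_card_level k hk₂) h₀ (hK ▸ hdvd) hgap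
    with ⟨h₁, h₂⟩ | ⟨-, h₁, h₂⟩
  · have hk : ∀ i, k i = 0 := by simpa [h₁, h₂] using hK
    simp only [hk, CharP.cast_eq_zero, sum_const_zero, add_zero] at hsum
    left
    intro i
    rw [hyk, hk, CharP.cast_eq_zero, add_zero]
    linarith
  · have hv : v = -2 / 3 := by
      rw [← Nat.cast_sum, hK, h₁, h₂] at hsum
      push_cast at hsum
      linarith
    right
    refine ⟨?_, ?_, ?_⟩
    · rw [hlevel 2 _ (by rw [hv]; norm_num), h₂]
    · rw [hlevel 1 _ (by rw [hv]; norm_num), h₁]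
    · rw [hlevel 0 _ (by rw [hv]; norm_num)]
      have := card_level_add_card_level_add_card_level k hk₂
      simp only [Fintype.card_fin] at this
      omega

theorem addable_vectors_J93 (x0 : EuclideanSpace ℝ (Fin 9)) (hx0 : ∀ i, x0 i = 1/3) :
    (∀ y ∈ Hyp 9 3 \ JohnsonRep 9 3,
      (IsSDistanceSet 3 (JohnsonRep 9 3 ∪ {y}) ↔ (y = x0 ∨ y ∈ X93))) ∧
    (∀ y ∈ X93, dist x0 y = Real.sqrt 2) ∧
    (∀ y ∈ X93, (2 : ℝ) • x0 - y ∈ X93 ∧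
      dist y ((2 : ℝ) • x0 - y) = 2 * Real.sqrt 2) := by
  refine ⟨fun y ⟨hyH, hyJ⟩ => ?_, fun y hy => X93.dist_eq_sqrt_two hx0 hy,
    fun y hy => ⟨X93.reflect_mem hx0 hy, X93.dist_reflect hx0 hy⟩⟩
  have hx0_iff : y = x0 ↔ ∀ i, y i = 1 / 3 :=
    ⟨by rintro rfl; exact hx0, fun h => by ext i; rw [h, hx0]⟩
  rw [isSDistanceSet_johnsonRep_union_iff hyJ, hx0_iff]
  refine ⟨fun hdist => eq_one_third_or_mem_X93 hdist (by simpa [Hyp] using hyH), ?_⟩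
  rintro (hy | hy) T hT
  · rw [dist_indicatorVec_sq, hT]
    simp only [hy, sum_const, card_univ, Fintype.card_fin, hT, nsmul_eq_mul]
    norm_num
  · exact X93.dist_indicatorVec_sq_mem hy hT
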